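/- arXiv:2408.16918 — 8 statements merged into one kernel-verified Lean document; each statement's English description precedes it below -/
import Mathlib

section
/- Let F : ℝ^m → ℝ^m be continuously differentiable such that the image F(ℝ^m) is a closed set and the Jacobian determinant of F is nonzero at every point x with F(x) ≠ 0. Then there exists a point x̄ ∈ ℝ^m with F(x̄) = 0; in particular, VI(ℝ^m, F) has a solution. -/
theorem exists_zero_of_closed_range_of_jacobian_ne_zero (m : ℕ)
    (F : EuclideanSpace ℝ (Fin m) → EuclideanSpace ℝ (Fin m))
    (hF : ContDiff ℝ 1 F)
    (hclosed : IsClosed (Set.range F))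
    (hjac : ∀ x, F x ≠ 0 → LinearMap.det ((fderiv ℝ F x) :
      EuclideanSpace ℝ (Fin m) →ₗ[ℝ] EuclideanSpace ℝ (Fin m)) ≠ 0) :
    ∃ xb, F xb = 0 := by
  by_contra h
  push_neg at h
  set S := Set.range F with hS
  -- minimizer of norm on the compact set K = closedBall 0 ‖F 0‖ ∩ S
  have hK : IsCompact (Metric.closedBall (0 : EuclideanSpace ℝ (Fin m)) ‖F 0‖ ∩ S) :=
    (isCompact_closedBall _ _).inter_right hclosed
  have hKne : (Metric.closedBall (0 : EuclideanSpace ℝ (Fin m)) ‖F 0‖ ∩ S).Nonempty :=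
    ⟨F 0, by simp, ⟨0, rfl⟩⟩
  obtain ⟨y, hyK, hymin⟩ := hK.exists_isMinOn hKne continuous_norm.continuousOn
  obtain ⟨hyball, x, hx⟩ := hyK
  have hyF0 : ‖y‖ ≤ ‖F 0‖ := hymin ⟨by simp, ⟨0, rfl⟩⟩
  have hmin' : ∀ z ∈ S, ‖y‖ ≤ ‖z‖ := by
    intro z hz
    by_cases hzb : ‖z‖ ≤ ‖F 0‖
    · exact hymin ⟨by simpa [Metric.mem_closedBall, dist_zero_right] using hzb, hz⟩
    · exact hyF0.trans (le_of_not_ge hzb)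
  have hy0 : y ≠ 0 := hx ▸ h x
  -- Jacobian at x is invertible; inverse function theorem gives local openness
  have hdet := hjac x (hx.symm ▸ hy0)
  let e : EuclideanSpace ℝ (Fin m) ≃ₗ[ℝ] EuclideanSpace ℝ (Fin m) :=
    LinearMap.equivOfDetNeZero _ hdet
  let E : EuclideanSpace ℝ (Fin m) ≃L[ℝ] EuclideanSpace ℝ (Fin m) :=
    e.toContinuousLinearEquiv
  have hderiv : HasStrictFDerivAt F (E : EuclideanSpace ℝ (Fin m) →L[ℝ]
      EuclideanSpace ℝ (Fin m)) x := by
    have h1 : HasStrictFDerivAt F (fderiv ℝ F x) x := hF.hasStrictFDerivAt one_ne_zero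
    have : (E : EuclideanSpace ℝ (Fin m) →L[ℝ] EuclideanSpace ℝ (Fin m)) = fderiv ℝ F x := by
      ext v
      rfl
    rwa [this]
  have hmap : Filter.map F (nhds x) = nhds (F x) := hderiv.map_nhds_eq_of_equiv
  have hSnhds : S ∈ nhds y := by
    rw [← hx, ← hmap, Filter.mem_map]
    filter_upwards with a using ⟨a, rfl⟩
  -- find t < 1 close to 1 with t • y ∈ S, contradicting minimality
  have htend : Filter.Tendsto (fun t : ℝ => t • y) (nhdsWithin 1 (Set.Ioo 0 1)) (nhds y) := by
    have : Filter.Tendsto (fun t : ℝ => t • y) (nhds 1) (nhds y) := by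
      simpa using (Filter.tendsto_id (x := nhds (1:ℝ))).smul_const y
    exact this.mono_left nhdsWithin_le_nhds
  have hne : (nhdsWithin (1 : ℝ) (Set.Ioo 0 1)).NeBot := by
    apply mem_closure_iff_nhdsWithin_neBot.mp
    rw [closure_Ioo (by norm_num : (0:ℝ) ≠ 1)]
    exact ⟨le_of_lt one_pos, le_rfl⟩
  have hev : ∀ᶠ t : ℝ in nhdsWithin 1 (Set.Ioo 0 1), t • y ∈ S := htend.eventually_mem hSnhds
  have hev2 : ∀ᶠ t : ℝ in nhdsWithin 1 (Set.Ioo 0 1), t ∈ Set.Ioo (0:ℝ) 1 :=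
    self_mem_nhdsWithin
  obtain ⟨t, htS, ht0, ht1⟩ := (hev.and hev2).exists
  have : ‖t • y‖ < ‖y‖ := by
    rw [norm_smul, Real.norm_eq_abs, abs_of_pos ht0]
    exact mul_lt_of_lt_one_left (norm_pos_iff.mpr hy0) ht1
  exact absurd (hmin' _ htS) (not_le.mpr this)
end

section
/- Let F : ℝ^m → ℝ^m be continuously differentiable with F(ℝ^m) closed, such that for every x ∈ ℝ^m the Jacobian ∇F(x) is an orthogonal matrix (∇F(x)⁻¹ = ∇F(x)ᵀ). Then VI(ℝ^m, F) has a solution, i.e., there exists x̄ with F(x̄) = 0. -/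
theorem exists_zero_of_orthogonal_jacobian (m : ℕ)
    (F : EuclideanSpace ℝ (Fin m) → EuclideanSpace ℝ (Fin m))
    (hF : ContDiff ℝ 1 F)
    (hclosed : IsClosed (Set.range F))
    (J : EuclideanSpace ℝ (Fin m) → Matrix (Fin m) (Fin m) ℝ)
    (hJ : ∀ x i j, J x i j = fderiv ℝ F x (EuclideanSpace.single j (1 : ℝ)) i)
    (horth : ∀ x, J x * (J x).transpose = 1) :
    ∃ xb, F xb = 0 := by
  -- each fderiv is bijective
  have hinj : ∀ x, Function.Injective (fderiv ℝ F x) := by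
    intro x v w h
    have hsub : fderiv ℝ F x (v - w) = 0 := by rw [map_sub, h, sub_self]
    set u := v - w with hu
    suffices hz : u = 0 by
      have := sub_eq_zero.mp hz
      exact this
    have hrep : u = ∑ j, u j • EuclideanSpace.single j (1 : ℝ) := by
      ext i
      rw [show ((∑ j, u j • EuclideanSpace.single j (1:ℝ)) i)
          = ∑ j, (u j • EuclideanSpace.single j (1:ℝ)) i from
        (by rw [WithLp.ofLp_sum, Finset.sum_apply])]
      simp [EuclideanSpace.single_apply]
    have happ : ∀ i, (J x).mulVec (fun j => u j) i = 0 := by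
      intro i
      have : fderiv ℝ F x u i = 0 := by rw [hsub]; rfl
      rw [hrep] at this
      simp only [map_sum, map_smul] at this
      simp only [Matrix.mulVec, dotProduct]
      rw [show (0:ℝ) = (∑ j, u j • fderiv ℝ F x (EuclideanSpace.single j 1)) i from this.symm]
      rw [WithLp.ofLp_sum, Finset.sum_apply]
      congr 1
      ext j
      rw [hJ x i j]
      simp [mul_comm]
    have hmul : (J x).mulVec (fun j => u j) = 0 := funext happ
    have hleft : (J x).transpose * J x = 1 := mul_eq_one_comm.mp (horth x)
    have : (fun j => u j) = 0 := by
      have := congrArg ((J x).transpose.mulVec) hmul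
      rwa [Matrix.mulVec_mulVec, hleft, Matrix.one_mulVec, Matrix.mulVec_zero] at this
    ext i
    exact congrFun this i
  have hbij : ∀ x, Function.Bijective (fderiv ℝ F x) := fun x =>
    ⟨hinj x, (LinearMap.injective_iff_surjective (f := (fderiv ℝ F x).toLinearMap)).mp (hinj x)⟩
  -- continuous linear equivs
  let e : ∀ x, EuclideanSpace ℝ (Fin m) ≃L[ℝ] EuclideanSpace ℝ (Fin m) := fun x =>
    (LinearEquiv.ofBijective (fderiv ℝ F x).toLinearMap (hbij x)).toContinuousLinearEquiv
  have he : ∀ x, (e x : EuclideanSpace ℝ (Fin m) →L[ℝ] EuclideanSpace ℝ (Fin m))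
      = fderiv ℝ F x := by
    intro x; ext v; rfl
  have hstrict : ∀ x, HasStrictFDerivAt F (e x : EuclideanSpace ℝ (Fin m) →L[ℝ]
      EuclideanSpace ℝ (Fin m)) x := by
    intro x
    rw [he x]
    exact (hF.contDiffAt).hasStrictFDerivAt one_ne_zero
  have hopenmap : IsOpenMap F := isOpenMap_of_hasStrictFDerivAt_equiv hstrict
  have hopen : IsOpen (Set.range F) := hopenmap.isOpen_range
  have hclopen : IsClopen (Set.range F) := ⟨hclosed, hopen⟩
  have huniv : Set.range F = Set.univ :=
    hclopen.eq_univ ⟨F 0, Set.mem_range_self 0⟩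
  have : (0 : EuclideanSpace ℝ (Fin m)) ∈ Set.range F := huniv ▸ Set.mem_univ _
  exact this
end

section
/- Let F : ℝ^m → ℝ^m be continuously differentiable. Suppose that (i) for every sequence {x^k} ⊆ ℝ^m, boundedness of {‖F(x^k)‖} implies boundedness of {‖x^k‖}, and (ii) |∇F(x)| ≠ 0 for every x with F(x) ≠ 0. Then there exists x̄ ∈ ℝ^m with F(x̄) = 0, i.e., VI(ℝ^m, F) has a solution. -/
theorem exists_zero_of_semicoercive (m : ℕ)
    (F : EuclideanSpace ℝ (Fin m) → EuclideanSpace ℝ (Fin m))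
    (hF : ContDiff ℝ 1 F)
    (hsemi : ∀ x : ℕ → EuclideanSpace ℝ (Fin m),
      (∃ C, ∀ k, ‖F (x k)‖ ≤ C) → ∃ C, ∀ k, ‖x k‖ ≤ C)
    (hjac : ∀ x, F x ≠ 0 → LinearMap.det ((fderiv ℝ F x) :
      EuclideanSpace ℝ (Fin m) →ₗ[ℝ] EuclideanSpace ℝ (Fin m)) ≠ 0) :
    ∃ xb, F xb = 0 := by
  set c : ℝ := ⨅ x : EuclideanSpace ℝ (Fin m), ‖F x‖ with hc
  have hbdd : BddBelow (Set.range fun x : EuclideanSpace ℝ (Fin m) => ‖F x‖) :=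
    ⟨0, by rintro y ⟨x, rfl⟩; exact norm_nonneg _⟩
  have hle : ∀ x : EuclideanSpace ℝ (Fin m), c ≤ ‖F x‖ := fun x => ciInf_le hbdd x
  -- minimizing sequence
  have hseq : ∀ k : ℕ, ∃ x : EuclideanSpace ℝ (Fin m), ‖F x‖ < c + 1 / (k + 1) := by
    intro k
    obtain ⟨y, hy⟩ := exists_lt_of_ciInf_lt (show c < c + 1 / (k + 1) by
      have h0 : (0:ℝ) < 1 / ((k:ℝ)+1) := by positivity
      linarith)
    exact ⟨y, hy⟩
  choose x hx using hseq
  have hFb : ∃ C, ∀ k, ‖F (x k)‖ ≤ C := ⟨c + 1, fun k => le_of_lt <| (hx k).trans_le <| by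
    have : (1 : ℝ) / (k + 1) ≤ 1 := by
      rw [div_le_one (by positivity)]; linarith [Nat.cast_nonneg (α := ℝ) k]
    linarith⟩
  obtain ⟨C, hC⟩ := hsemi x hFb
  have hmem : ∀ k, x k ∈ Metric.closedBall (0 : EuclideanSpace ℝ (Fin m)) C := by
    intro k; simpa [Metric.mem_closedBall] using hC k
  obtain ⟨xb, -, φ, hφ, hlim⟩ :=
    (isCompact_closedBall (0 : EuclideanSpace ℝ (Fin m)) C).tendsto_subseq hmem
  have hFlim : Filter.Tendsto (fun k => ‖F (x (φ k))‖) Filter.atTop (nhds ‖F xb‖) :=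
    ((hF.continuous.tendsto xb).comp hlim).norm
  have hupper : Filter.Tendsto (fun k : ℕ => c + 1 / (φ k + 1)) Filter.atTop (nhds c) := by
    have h1 : Filter.Tendsto (fun n : ℕ => 1 / ((n : ℝ) + 1)) Filter.atTop (nhds 0) :=
      tendsto_one_div_add_atTop_nhds_zero_nat
    have h2 : Filter.Tendsto (fun k : ℕ => 1 / ((φ k : ℝ) + 1)) Filter.atTop (nhds 0) :=
      h1.comp hφ.tendsto_atTop
    have h3 := Filter.Tendsto.add
      (tendsto_const_nhds : Filter.Tendsto (fun _ : ℕ => c) Filter.atTop (nhds c)) h2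
    simpa using h3
  have hsq : Filter.Tendsto (fun k => ‖F (x (φ k))‖) Filter.atTop (nhds c) := by
    refine tendsto_of_tendsto_of_tendsto_of_le_of_le tendsto_const_nhds hupper
      (fun k => hle _) (fun k => (hx (φ k)).le)
  have hnormeq : ‖F xb‖ = c := tendsto_nhds_unique hFlim hsq
  -- Suppose F xb ≠ 0 and derive a contradiction
  by_contra hcon
  push_neg at hcon
  have hFxb : F xb ≠ 0 := hcon xb
  have hcpos : 0 < c := by
    rw [← hnormeq]; exact norm_pos_iff.2 hFxb
  have hdet := hjac xb hFxb
  set f' := fderiv ℝ F xb with hf'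
  letI b := (EuclideanSpace.basisFun (Fin m) ℝ).toBasis
  have hU : IsUnit (LinearMap.toMatrix b b (f' : EuclideanSpace ℝ (Fin m) →ₗ[ℝ] EuclideanSpace ℝ (Fin m))).det := by
    rw [LinearMap.det_toMatrix]
    exact isUnit_iff_ne_zero.2 hdet
  set e := LinearEquiv.ofIsUnitDet hU with he
  set ce := e.toContinuousLinearEquiv with hce
  have hcoe : (ce : EuclideanSpace ℝ (Fin m) →L[ℝ] EuclideanSpace ℝ (Fin m)) = f' := by
    refine ContinuousLinearMap.ext fun v => ?_
    have h1 : (e : EuclideanSpace ℝ (Fin m) →ₗ[ℝ] EuclideanSpace ℝ (Fin m))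
        = (f' : EuclideanSpace ℝ (Fin m) →ₗ[ℝ] EuclideanSpace ℝ (Fin m)) :=
      LinearEquiv.coe_ofIsUnitDet hU
    exact LinearMap.congr_fun h1 v
  have hstrict : HasStrictFDerivAt F
      (ce : EuclideanSpace ℝ (Fin m) →L[ℝ] EuclideanSpace ℝ (Fin m)) xb := by
    rw [hcoe]
    exact (hF.contDiffAt).hasStrictFDerivAt one_ne_zero
  have hmap : Filter.map F (nhds xb) = nhds (F xb) := hstrict.map_nhds_eq_of_equiv
  have hrange : Set.range F ∈ nhds (F xb) := by
    rw [← hmap, Filter.mem_map]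
    have : F ⁻¹' Set.range F = Set.univ := by
      ext z; simp [Set.mem_range]
    rw [this]; exact Filter.univ_mem
  obtain ⟨ε, hε, hball⟩ := Metric.mem_nhds_iff.1 hrange
  set t : ℝ := min (1/2) (ε / (2 * c)) with ht
  have ht0 : 0 < t := lt_min (by norm_num) (by positivity)
  have ht1 : t < 1 := lt_of_le_of_lt (min_le_left _ _) (by norm_num)
  set y : EuclideanSpace ℝ (Fin m) := (1 - t) • F xb with hy
  have hymem : y ∈ Metric.ball (F xb) ε := by
    rw [Metric.mem_ball, dist_eq_norm]
    have : y - F xb = (-t) • F xb := by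
      rw [hy]; module
    rw [this, norm_smul, hnormeq]
    have : ‖(-t : ℝ)‖ = t := by rw [norm_neg, Real.norm_of_nonneg ht0.le]
    rw [this]
    calc t * c ≤ (ε / (2 * c)) * c := by
          exact mul_le_mul_of_nonneg_right (min_le_right _ _) hcpos.le
      _ = ε / 2 := by field_simp
      _ < ε := by linarith
  obtain ⟨z, hz⟩ := hball hymem
  have hzlt : ‖F z‖ < c := by
    rw [hz, hy, norm_smul, hnormeq, Real.norm_of_nonneg (by linarith)]
    nlinarith
  exact absurd (hle z) (not_le.2 hzlt)
end

section
/- Let K ⊆ ℝ^m be nonempty, closed and convex. Let φ : K → ℝ^m be strongly monotone with constant μ > 0 and let x̃ ∈ K be a solution of VI(K, φ). Let F : K → ℝ^m satisfy ‖φ(x) − F(x)‖ ≤ d ‖x − x̃‖ for all x ∈ K, where 0 ≤ d < μ. Then x̃ is a Minty solution of VI(K, F): ⟨F(x), x − x̃⟩ ≥ 0 for all x ∈ K. -/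
open scoped RealInnerProductSpace

theorem minty_sol_of_strongly_monotone_perturbation (m : ℕ)
    (K : Set (EuclideanSpace ℝ (Fin m)))
    (φ F : EuclideanSpace ℝ (Fin m) → EuclideanSpace ℝ (Fin m))
    (hne : K.Nonempty) (hcl : IsClosed K) (hconv : Convex ℝ K)
    (μ : ℝ) (hμ : 0 < μ)
    (hsm : ∀ x ∈ K, ∀ y ∈ K, μ * ‖x - y‖ ^ 2 ≤ ⟪φ x - φ y, x - y⟫)
    (xt : EuclideanSpace ℝ (Fin m)) (hxt : xt ∈ K)
    (hsol : ∀ x ∈ K, 0 ≤ ⟪φ xt, x - xt⟫)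
    (d : ℝ) (hd0 : 0 ≤ d) (hd : d < μ)
    (hFd : ∀ x ∈ K, ‖φ x - F x‖ ≤ d * ‖x - xt‖) :
    ∀ x ∈ K, 0 ≤ ⟪F x, x - xt⟫ := by
  intro x hx
  have h1 : μ * ‖x - xt‖ ^ 2 ≤ ⟪φ x - φ xt, x - xt⟫ := hsm x hx xt hxt
  have h2 : 0 ≤ ⟪φ xt, x - xt⟫ := hsol x hx
  have h3 : ⟪φ x - F x, x - xt⟫ ≤ d * ‖x - xt‖ ^ 2 := by
    calc ⟪φ x - F x, x - xt⟫ ≤ ‖φ x - F x‖ * ‖x - xt‖ := real_inner_le_norm _ _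
    _ ≤ (d * ‖x - xt‖) * ‖x - xt‖ := by
        exact mul_le_mul_of_nonneg_right (hFd x hx) (norm_nonneg _)
    _ = d * ‖x - xt‖ ^ 2 := by ring
  have key : ⟪F x, x - xt⟫ = ⟪φ x - φ xt, x - xt⟫ + ⟪φ xt, x - xt⟫ - ⟪φ x - F x, x - xt⟫ := by
    simp [inner_sub_left]
  rw [key]
  have : (μ - d) * ‖x - xt‖ ^ 2 ≥ 0 := mul_nonneg (by linarith) (by positivity)
  nlinarith
end

section
/- Let K ⊆ ℝ^m be nonempty, closed and convex, φ : K → ℝ^m strongly monotone with constant μ, x̃ ∈ K a solution of VI(K, φ), and F : K → ℝ^m with ‖φ(x) − F(x)‖ ≤ d‖x − x̃‖ for all x ∈ K where d < μ. Then the strengthened Minty inequality (μ − d)‖x − x̃‖² ≤ ⟨F(x), x − x̃⟩ holds for all x ∈ K. -/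
open scoped RealInnerProductSpace

theorem strengthened_minty_inequality (m : ℕ)
    (K : Set (EuclideanSpace ℝ (Fin m)))
    (φ F : EuclideanSpace ℝ (Fin m) → EuclideanSpace ℝ (Fin m))
    (hne : K.Nonempty) (hcl : IsClosed K) (hconv : Convex ℝ K)
    (μ : ℝ)
    (hsm : ∀ x ∈ K, ∀ y ∈ K, μ * ‖x - y‖ ^ 2 ≤ ⟪φ x - φ y, x - y⟫)
    (xt : EuclideanSpace ℝ (Fin m)) (hxt : xt ∈ K)
    (hsol : ∀ x ∈ K, 0 ≤ ⟪φ xt, x - xt⟫)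
    (d : ℝ) (hd : d < μ)
    (hFd : ∀ x ∈ K, ‖φ x - F x‖ ≤ d * ‖x - xt‖) :
    ∀ x ∈ K, (μ - d) * ‖x - xt‖ ^ 2 ≤ ⟪F x, x - xt⟫ := by
  intro x hx
  have h1 := hsm x hx xt hxt
  have h2 := hsol x hx
  have h3 : ⟪φ x - F x, x - xt⟫ ≤ d * ‖x - xt‖ ^ 2 := by
    calc ⟪φ x - F x, x - xt⟫ ≤ ‖φ x - F x‖ * ‖x - xt‖ := real_inner_le_norm _ _
      _ ≤ (d * ‖x - xt‖) * ‖x - xt‖ := by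
          apply mul_le_mul_of_nonneg_right (hFd x hx) (norm_nonneg _)
      _ = d * ‖x - xt‖ ^ 2 := by ring
  have e1 : ⟪φ x - φ xt, x - xt⟫ = ⟪φ x, x - xt⟫ - ⟪φ xt, x - xt⟫ :=
    inner_sub_left _ _ _
  have e2 : ⟪φ x - F x, x - xt⟫ = ⟪φ x, x - xt⟫ - ⟪F x, x - xt⟫ :=
    inner_sub_left _ _ _
  nlinarith [h1, h2, h3]
end

section
/- Let K ⊆ ℝ^m be nonempty, closed and convex, and let F : K → ℝ^m be L-Lipschitz. Suppose VI(K,F) has a Minty solution x̃. Consider the extra-gradient iteration with stepsize 0 < α < 1/L: y^k = Π_K[x^k − α F(x^k)], x^{k+1} = Π_K[x^k − α F(y^k)], starting from x^0 ∈ K. Then for all k ≥ 0: ‖x^{k+1} − x̃‖² ≤ ‖x^k − x̃‖² − (1 − α²L²)‖x^k − y^k‖². -/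
open scoped RealInnerProductSpace

set_option maxHeartbeats 1000000

section Aux

variable {E : Type*} [NormedAddCommGroup E] [InnerProductSpace ℝ E]

lemma eg_three_point (a b c : E) :
    ‖a - b‖ ^ 2 = ‖a - c‖ ^ 2 + 2 * ⟪a - c, c - b⟫ + ‖c - b‖ ^ 2 := by
  have h : a - b = (a - c) + (c - b) := by abel
  rw [h, norm_add_sq_real]

lemma eg_vi {K : Set E} (hne : K.Nonempty) (hconv : Convex ℝ K)
    (proj : E → E) (hproj : ∀ z, proj z ∈ K ∧ ∀ y ∈ K, ‖z - proj z‖ ≤ ‖z - y‖)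
    (z : E) {w : E} (hw : w ∈ K) : ⟪z - proj z, w - proj z⟫ ≤ 0 := by
  haveI : Nonempty K := hne.to_subtype
  have hinf : ‖z - proj z‖ = ⨅ w : K, ‖z - (w : E)‖ := by
    refine le_antisymm (le_ciInf fun w => (hproj z).2 w w.2) ?_
    have hbdd : BddBelow (Set.range fun w : K => ‖z - (w : E)‖) := by
      refine ⟨0, ?_⟩; rintro _ ⟨w, rfl⟩; positivity
    exact ciInf_le hbdd ⟨proj z, (hproj z).1⟩
  exact (norm_eq_iInf_iff_real_inner_le_zero hconv (hproj z).1).mp hinf w hw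

end Aux

theorem extragradient_key_inequality (m : ℕ)
    (K : Set (EuclideanSpace ℝ (Fin m)))
    (F : EuclideanSpace ℝ (Fin m) → EuclideanSpace ℝ (Fin m))
    (hne : K.Nonempty) (hcl : IsClosed K) (hconv : Convex ℝ K)
    (L : ℝ) (hL : 0 < L) (hLip : ∀ x ∈ K, ∀ y ∈ K, ‖F x - F y‖ ≤ L * ‖x - y‖)
    (xt : EuclideanSpace ℝ (Fin m)) (hxt : xt ∈ K)
    (hminty : ∀ x ∈ K, 0 ≤ ⟪F x, x - xt⟫)
    (α : ℝ) (hα0 : 0 < α) (hα1 : α < 1 / L)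
    (proj : EuclideanSpace ℝ (Fin m) → EuclideanSpace ℝ (Fin m))
    (hproj : ∀ z, proj z ∈ K ∧ ∀ y ∈ K, ‖z - proj z‖ ≤ ‖z - y‖)
    (x y : ℕ → EuclideanSpace ℝ (Fin m)) (hx0 : x 0 ∈ K)
    (hy : ∀ k, y k = proj (x k - α • F (x k)))
    (hxk : ∀ k, x (k + 1) = proj (x k - α • F (y k))) :
    ∀ k, ‖x (k + 1) - xt‖ ^ 2 ≤
      ‖x k - xt‖ ^ 2 - (1 - α ^ 2 * L ^ 2) * ‖x k - y k‖ ^ 2 := by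
  have hxK : ∀ k, x k ∈ K := by
    intro k
    induction k with
    | zero => exact hx0
    | succ n ih => rw [hxk n]; exact (hproj _).1
  intro k
  set p := x k with hp
  set q := y k with hq
  set r := x (k + 1) with hr
  have hpK : p ∈ K := hxK k
  have hqK : q ∈ K := by rw [hq, hy k]; exact (hproj _).1
  have hrK : r ∈ K := by rw [hr, hxk k]; exact (hproj _).1
  -- variational inequalities
  have VI1 : ⟪(p - α • F p) - q, r - q⟫ ≤ 0 := by
    have := eg_vi hne hconv proj hproj (p - α • F p) hrK
    rwa [← hy k, ← hq] at this
  have VI2 : ⟪(p - α • F q) - r, xt - r⟫ ≤ 0 := by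
    have := eg_vi hne hconv proj hproj (p - α • F q) hxt
    rwa [← hxk k, ← hr] at this
  -- three-point identities
  have T1 : ‖(p - α • F q) - xt‖ ^ 2
      = ‖(p - α • F q) - r‖ ^ 2 + 2 * ⟪(p - α • F q) - r, r - xt⟫ + ‖r - xt‖ ^ 2 :=
    eg_three_point _ _ _
  have T2 : ‖p - r‖ ^ 2 = ‖p - q‖ ^ 2 + 2 * ⟪p - q, q - r⟫ + ‖q - r‖ ^ 2 :=
    eg_three_point _ _ _
  have hflip : ⟪(p - α • F q) - r, r - xt⟫ = - ⟪(p - α • F q) - r, xt - r⟫ := by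
    rw [← inner_neg_right]; congr 1; abel
  have step1 : ‖r - xt‖ ^ 2 ≤ ‖(p - α • F q) - xt‖ ^ 2 - ‖(p - α • F q) - r‖ ^ 2 := by
    rw [T1]; rw [hflip] at *; linarith
  -- expand the shifted norms
  have E1 : ‖(p - α • F q) - xt‖ ^ 2
      = ‖p - xt‖ ^ 2 - 2 * (α * ⟪F q, p - xt⟫) + α ^ 2 * ‖F q‖ ^ 2 := by
    have h : (p - α • F q) - xt = (p - xt) + (-(α • F q)) := by abel
    rw [h, norm_add_sq_real, inner_neg_right, real_inner_smul_right, norm_neg,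
      norm_smul, Real.norm_eq_abs, mul_pow, sq_abs, real_inner_comm]
    ring
  have E2 : ‖(p - α • F q) - r‖ ^ 2
      = ‖p - r‖ ^ 2 - 2 * (α * ⟪F q, p - r⟫) + α ^ 2 * ‖F q‖ ^ 2 := by
    have h : (p - α • F q) - r = (p - r) + (-(α • F q)) := by abel
    rw [h, norm_add_sq_real, inner_neg_right, real_inner_smul_right, norm_neg,
      norm_smul, Real.norm_eq_abs, mul_pow, sq_abs, real_inner_comm]
    ring
  -- inner product decompositions
  have D1 : ⟪F q, p - xt⟫ = ⟪F q, p - r⟫ + ⟪F q, r - q⟫ + ⟪F q, q - xt⟫ := by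
    rw [← inner_add_right, ← inner_add_right]; congr 1; abel
  have hm : 0 ≤ ⟪F q, q - xt⟫ := hminty q hqK
  -- key cross term bound
  have D2 : ⟪q - (p - α • F q), q - r⟫
      = ⟪(p - α • F p) - q, r - q⟫ + α * ⟪F q - F p, q - r⟫ := by
    have h1 : q - (p - α • F q) = -((p - α • F p) - q) + α • (F q - F p) := by
      rw [smul_sub]; abel
    have h2 : (r - q) = -(q - r) := by abel
    rw [h1, inner_add_left, inner_neg_left, real_inner_smul_left, h2, inner_neg_right]
  have hlip' : ‖F q - F p‖ ≤ L * ‖p - q‖ := by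
    have := hLip q hqK p hpK
    rwa [norm_sub_rev q p] at this
  have hcs : ⟪F q - F p, q - r⟫ ≤ L * ‖p - q‖ * ‖q - r‖ := by
    calc ⟪F q - F p, q - r⟫ ≤ ‖F q - F p‖ * ‖q - r‖ := real_inner_le_norm _ _
    _ ≤ L * ‖p - q‖ * ‖q - r‖ := by
        apply mul_le_mul_of_nonneg_right hlip' (norm_nonneg _)
  have cross : ⟪q - (p - α • F q), q - r⟫ ≤ α * (L * ‖p - q‖ * ‖q - r‖) := by
    rw [D2]
    have := mul_le_mul_of_nonneg_left hcs hα0.le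
    linarith
  -- rewrite cross term
  have D3 : ⟪q - (p - α • F q), q - r⟫ = - ⟪p - q, q - r⟫ + α * ⟪F q, q - r⟫ := by
    rw [show q - (p - α • F q) = -(p - q) + α • F q from by abel,
      inner_add_left, inner_neg_left, real_inner_smul_left]
  have hFqr : ⟪F q, r - q⟫ = - ⟪F q, q - r⟫ := by
    rw [← inner_neg_right]; congr 1; abel
  -- AM-GM
  have amgm : 2 * (α * (L * ‖p - q‖ * ‖q - r‖))
      ≤ α ^ 2 * L ^ 2 * ‖p - q‖ ^ 2 + ‖q - r‖ ^ 2 := by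
    nlinarith [sq_nonneg (α * L * ‖p - q‖ - ‖q - r‖)]
  -- combine everything
  have cross' := cross
  rw [D3] at cross'
  have D1' : α * ⟪F q, p - xt⟫
      = α * ⟪F q, p - r⟫ + α * ⟪F q, r - q⟫ + α * ⟪F q, q - xt⟫ := by
    rw [D1]; ring
  have hFqr' : α * ⟪F q, r - q⟫ = -(α * ⟪F q, q - r⟫) := by rw [hFqr]; ring
  have hm' : 0 ≤ α * ⟪F q, q - xt⟫ := mul_nonneg hα0.le hm
  linarith [step1, E1, E2, D1', hFqr', hm', T2, cross', amgm]
end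

section
/- Let K ⊆ ℝ^m be nonempty, closed and convex, F : K → ℝ^m be L-Lipschitz, and suppose VI(K,F) has a Minty solution. Then the extra-gradient iterates with stepsize 0 < α < 1/L (y^k = Π_K[x^k − αF(x^k)], x^{k+1} = Π_K[x^k − αF(y^k)]) form a bounded sequence {x^k}, ‖x^k − y^k‖ → 0, and every accumulation point of {x^k} is a solution of VI(K,F). -/
open scoped RealInnerProductSpace
open Filter

set_option maxHeartbeats 1000000

theorem extragradient_convergence_minty (m : ℕ)
    (K : Set (EuclideanSpace ℝ (Fin m)))
    (F : EuclideanSpace ℝ (Fin m) → EuclideanSpace ℝ (Fin m))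
    (hne : K.Nonempty) (hcl : IsClosed K) (hconv : Convex ℝ K)
    (L : ℝ) (hL : 0 < L) (hLip : ∀ x ∈ K, ∀ y ∈ K, ‖F x - F y‖ ≤ L * ‖x - y‖)
    (xt : EuclideanSpace ℝ (Fin m)) (hxt : xt ∈ K)
    (hminty : ∀ x ∈ K, 0 ≤ ⟪F x, x - xt⟫)
    (α : ℝ) (hα0 : 0 < α) (hα1 : α < 1 / L)
    (proj : EuclideanSpace ℝ (Fin m) → EuclideanSpace ℝ (Fin m))
    (hproj : ∀ z, proj z ∈ K ∧ ∀ y ∈ K, ‖z - proj z‖ ≤ ‖z - y‖)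
    (x y : ℕ → EuclideanSpace ℝ (Fin m)) (hx0 : x 0 ∈ K)
    (hy : ∀ k, y k = proj (x k - α • F (x k)))
    (hxk : ∀ k, x (k + 1) = proj (x k - α • F (y k))) :
    (∃ C, ∀ k, ‖x k‖ ≤ C) ∧
    Filter.Tendsto (fun k => ‖x k - y k‖) Filter.atTop (nhds 0) ∧
    ∀ xh : EuclideanSpace ℝ (Fin m),
      (∃ φ : ℕ → ℕ, StrictMono φ ∧
        Filter.Tendsto (fun i => x (φ i)) Filter.atTop (nhds xh)) →
      xh ∈ K ∧ ∀ z ∈ K, 0 ≤ ⟪F xh, z - xh⟫ := by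
  haveI : Nonempty K := hne.to_subtype
  have hprojK : ∀ z, proj z ∈ K := fun z => (hproj z).1
  -- variational characterization of the projection
  have hchar : ∀ z, ∀ w ∈ K, ⟪z - proj z, w - proj z⟫ ≤ 0 := by
    intro z w hw
    have h1 : ‖z - proj z‖ = ⨅ w : K, ‖z - (w : EuclideanSpace ℝ (Fin m))‖ := by
      have hb : BddBelow (Set.range fun w : K => ‖z - (w : EuclideanSpace ℝ (Fin m))‖) := by
        refine ⟨0, ?_⟩
        rintro r ⟨w, rfl⟩
        exact norm_nonneg _
      apply le_antisymm
      · exact le_ciInf fun w => (hproj z).2 w w.2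
      · exact ciInf_le hb (⟨proj z, hprojK z⟩ : K)
    exact (norm_eq_iInf_iff_real_inner_le_zero hconv (hprojK z)).1 h1 w hw
  have hxK : ∀ k, x k ∈ K := by
    intro k
    induction k with
    | zero => exact hx0
    | succ n ih => rw [hxk]; exact hprojK _
  have hyK : ∀ k, y k ∈ K := fun k => (hy k) ▸ hprojK _
  have hαL : α * L < 1 := by
    rw [lt_div_iff₀ hL] at hα1; exact hα1
  have hcpos : 0 < 1 - α ^ 2 * L ^ 2 := by nlinarith [mul_pos hα0 hL]
  -- key one-step inequality
  have key : ∀ k, ‖x (k + 1) - xt‖ ^ 2 + (1 - α ^ 2 * L ^ 2) * ‖x k - y k‖ ^ 2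
      ≤ ‖x k - xt‖ ^ 2 := by
    intro k
    have h1 : ⟪x k - α • F (x k) - y k, x (k + 1) - y k⟫ ≤ 0 := by
      have h := hchar (x k - α • F (x k)) (x (k + 1)) (hxK (k + 1))
      rwa [← hy k] at h
    have h2 : ⟪x k - α • F (y k) - x (k + 1), xt - x (k + 1)⟫ ≤ 0 := by
      have h := hchar (x k - α • F (y k)) xt hxt
      rwa [← hxk k] at h
    have h3 : 0 ≤ ⟪F (y k), y k - xt⟫ := hminty (y k) (hyK k)
    have h4 : ‖F (x k) - F (y k)‖ ≤ L * ‖x k - y k‖ := hLip _ (hxK k) _ (hyK k)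
    set a := x k
    set b := y k
    set d := x (k + 1)
    set g := F (x k)
    set h := F (y k)
    -- step A
    have eA : ‖a - α • h - xt‖ ^ 2 =
        ‖a - α • h - d‖ ^ 2 + 2 * ⟪a - α • h - d, d - xt⟫ + ‖d - xt‖ ^ 2 := by
      rw [← sub_add_sub_cancel (a - α • h) d xt]
      exact norm_add_sq_real _ _
    have eA2 : ⟪a - α • h - d, d - xt⟫ = -⟪a - α • h - d, xt - d⟫ := by
      rw [← inner_neg_right, neg_sub]
    have stepA : ‖d - xt‖ ^ 2 ≤ ‖a - α • h - xt‖ ^ 2 - ‖a - α • h - d‖ ^ 2 := by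
      rw [eA, eA2]; linarith
    -- step B expansions
    have eB1 : ‖a - α • h - xt‖ ^ 2 =
        ‖a - xt‖ ^ 2 - 2 * α * ⟪h, a - xt⟫ + α ^ 2 * ‖h‖ ^ 2 := by
      have e : a - α • h - xt = (a - xt) - α • h := by module
      rw [e, norm_sub_sq_real, real_inner_smul_right, real_inner_comm, norm_smul]
      simp [mul_pow, sq_abs]
      ring
    have eB2 : ‖a - α • h - d‖ ^ 2 =
        ‖a - d‖ ^ 2 - 2 * α * ⟪h, a - d⟫ + α ^ 2 * ‖h‖ ^ 2 := by
      have e : a - α • h - d = (a - d) - α • h := by module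
      rw [e, norm_sub_sq_real, real_inner_smul_right, real_inner_comm, norm_smul]
      simp [mul_pow, sq_abs]
      ring
    have eI : ⟪h, a - xt⟫ - ⟪h, a - d⟫ = ⟪h, d - xt⟫ := by
      simp only [inner_sub_right]; ring
    have eC : ⟪h, d - xt⟫ = ⟪h, d - b⟫ + ⟪h, b - xt⟫ := by
      simp only [inner_sub_right]; ring
    have eD : ‖a - d‖ ^ 2 = ‖a - b‖ ^ 2 + 2 * ⟪a - b, b - d⟫ + ‖b - d‖ ^ 2 := by
      rw [← sub_add_sub_cancel a b d]
      exact norm_add_sq_real _ _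
    have eN : ⟪a - b, b - d⟫ = -⟪a - b, d - b⟫ := by
      rw [← inner_neg_right, neg_sub]
    have eN2 : ‖b - d‖ ^ 2 = ‖d - b‖ ^ 2 := by rw [norm_sub_rev]
    -- step E
    have eE1 : ⟪a - b - α • h, d - b⟫ = ⟪a - b, d - b⟫ - α * ⟪h, d - b⟫ := by
      simp only [inner_sub_left, real_inner_smul_left]
    have eE2 : ⟪a - b - α • h, d - b⟫ =
        ⟪a - α • g - b, d - b⟫ + α * ⟪g - h, d - b⟫ := by
      simp only [inner_sub_left, real_inner_smul_left, inner_sub_right]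
      ring
    have hCS : ⟪g - h, d - b⟫ ≤ (L * ‖a - b‖) * ‖d - b‖ :=
      (real_inner_le_norm _ _).trans (mul_le_mul_of_nonneg_right h4 (norm_nonneg _))
    have stepE : ⟪a - b, d - b⟫ - α * ⟪h, d - b⟫ ≤ α * ((L * ‖a - b‖) * ‖d - b‖) := by
      rw [← eE1, eE2]
      have := mul_le_mul_of_nonneg_left hCS hα0.le
      linarith
    have amgm : 2 * (α * ((L * ‖a - b‖) * ‖d - b‖)) ≤
        α ^ 2 * L ^ 2 * ‖a - b‖ ^ 2 + ‖d - b‖ ^ 2 := by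
      nlinarith [sq_nonneg (α * L * ‖a - b‖ - ‖d - b‖)]
    have h3' : 0 ≤ α * ⟪h, b - xt⟫ := mul_nonneg hα0.le h3
    nlinarith [stepA, eB1, eB2, eI, eC, eD, eN, eN2, stepE, amgm, h3']
  -- consequences
  have hmono : ∀ k, ‖x (k + 1) - xt‖ ^ 2 ≤ ‖x k - xt‖ ^ 2 := by
    intro k
    have := mul_nonneg hcpos.le (sq_nonneg ‖x k - y k‖)
    linarith [key k]
  have hanti : Antitone fun k => ‖x k - xt‖ ^ 2 := antitone_nat_of_succ_le hmono
  have hle0 : ∀ k, ‖x k - xt‖ ^ 2 ≤ ‖x 0 - xt‖ ^ 2 := fun k => hanti (Nat.zero_le k)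
  have hbdd : BddBelow (Set.range fun k => ‖x k - xt‖ ^ 2) := by
    refine ⟨0, ?_⟩; rintro r ⟨k, rfl⟩; positivity
  have hdt : Tendsto (fun k => ‖x k - xt‖ ^ 2) atTop (nhds (⨅ k, ‖x k - xt‖ ^ 2)) :=
    tendsto_atTop_ciInf hanti hbdd
  have hdt' : Tendsto (fun k => ‖x (k + 1) - xt‖ ^ 2) atTop
      (nhds (⨅ k, ‖x k - xt‖ ^ 2)) := hdt.comp (tendsto_add_atTop_nat 1)
  have hdiff : Tendsto (fun k => ‖x k - xt‖ ^ 2 - ‖x (k + 1) - xt‖ ^ 2) atTop (nhds 0) := by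
    simpa using hdt.sub hdt'
  have hsq0 : Tendsto (fun k => ‖x k - y k‖ ^ 2) atTop (nhds 0) := by
    have hg : Tendsto (fun k => (‖x k - xt‖ ^ 2 - ‖x (k + 1) - xt‖ ^ 2) / (1 - α ^ 2 * L ^ 2))
        atTop (nhds 0) := by
      simpa using hdiff.div_const (1 - α ^ 2 * L ^ 2)
    refine squeeze_zero (fun k => sq_nonneg _) (fun k => ?_) hg
    rw [le_div_iff₀ hcpos]
    linarith [key k]
  have hnt : Tendsto (fun k => ‖x k - y k‖) atTop (nhds 0) := by
    have h := (Real.continuous_sqrt.tendsto 0).comp hsq0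
    simp only [Real.sqrt_zero] at h
    refine h.congr fun k => ?_
    simp [Function.comp, Real.sqrt_sq (norm_nonneg _)]
  refine ⟨⟨‖x 0 - xt‖ + ‖xt‖, ?_⟩, hnt, ?_⟩
  · intro k
    have h1 : ‖x k - xt‖ ≤ ‖x 0 - xt‖ := by
      nlinarith [hle0 k, norm_nonneg (x k - xt), norm_nonneg (x 0 - xt)]
    calc ‖x k‖ = ‖(x k - xt) + xt‖ := by rw [sub_add_cancel]
    _ ≤ ‖x k - xt‖ + ‖xt‖ := norm_add_le _ _
    _ ≤ ‖x 0 - xt‖ + ‖xt‖ := by linarith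
  · rintro xh ⟨φ, hφmono, hφt⟩
    have hxhK : xh ∈ K := hcl.mem_of_tendsto hφt (Filter.Eventually.of_forall fun i => hxK (φ i))
    refine ⟨hxhK, fun z hz => ?_⟩
    have hφtop : Tendsto φ atTop atTop := hφmono.tendsto_atTop
    have hxy0 : Tendsto (fun k => x k - y k) atTop (nhds 0) := by
      rw [tendsto_zero_iff_norm_tendsto_zero]; exact hnt
    have hxyφ : Tendsto (fun i => x (φ i) - y (φ i)) atTop (nhds 0) := hxy0.comp hφtop
    have hyt : Tendsto (fun i => y (φ i)) atTop (nhds xh) := by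
      have h := hφt.sub hxyφ
      simpa using h
    have hFt : Tendsto (fun i => F (x (φ i))) atTop (nhds (F xh)) := by
      rw [tendsto_iff_norm_sub_tendsto_zero]
      have hxn : Tendsto (fun i => ‖x (φ i) - xh‖) atTop (nhds 0) := by
        have := tendsto_iff_norm_sub_tendsto_zero.1 hφt
        exact this
      have hg : Tendsto (fun i => L * ‖x (φ i) - xh‖) atTop (nhds 0) := by
        simpa using hxn.const_mul L
      exact squeeze_zero (fun i => norm_nonneg _)
        (fun i => hLip _ (hxK (φ i)) _ hxhK) hg
    have hineq : ∀ k, ⟪x k - y k, z - y k⟫ ≤ α * ⟪F (x k), z - y k⟫ := by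
      intro k
      have h := hchar (x k - α • F (x k)) z hz
      rw [← hy k] at h
      have expand : ⟪x k - α • F (x k) - y k, z - y k⟫ =
          ⟪x k - y k, z - y k⟫ - α * ⟪F (x k), z - y k⟫ := by
        simp only [inner_sub_left, real_inner_smul_left]; ring
      rw [expand] at h
      linarith
    have hzy : Tendsto (fun i => z - y (φ i)) atTop (nhds (z - xh)) :=
      tendsto_const_nhds.sub hyt
    have hL1 : Tendsto (fun i => ⟪x (φ i) - y (φ i), z - y (φ i)⟫) atTop (nhds 0) := by
      have h := Filter.Tendsto.inner (𝕜 := ℝ) hxyφ hzy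
      simpa using h
    have hL2 : Tendsto (fun i => α * ⟪F (x (φ i)), z - y (φ i)⟫) atTop
        (nhds (α * ⟪F xh, z - xh⟫)) :=
      (Filter.Tendsto.inner (𝕜 := ℝ) hFt hzy).const_mul α
    have hfin : (0 : ℝ) ≤ α * ⟪F xh, z - xh⟫ :=
      le_of_tendsto_of_tendsto' hL1 hL2 fun i => hineq (φ i)
    nlinarith [hfin]
end

section
/- Let K ⊆ ℝ^m be nonempty, closed and convex, F : K → ℝ^m be L-Lipschitz, φ : K → ℝ^m be strongly monotone with constant μ and x̃ ∈ K solve VI(K, φ), and assume ‖φ(x) − F(x)‖ ≤ d‖x − x̃‖ for all x ∈ K with d < μ. Then the extra-gradient iterates with 0 < α < 1/L satisfy for all k: ‖x^{k+1} − x̃‖² ≤ ‖x^k − x̃‖² − (1 − α²L²)‖x^k − y^k‖² − 2α(μ − d)‖y^k − x̃‖², and consequently both {x^k} and {y^k} converge to x̃. -/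
open scoped RealInnerProductSpace

set_option maxHeartbeats 1000000 in
theorem extragradient_convergence_to_minty_solution (m : ℕ)
    (K : Set (EuclideanSpace ℝ (Fin m)))
    (F φ : EuclideanSpace ℝ (Fin m) → EuclideanSpace ℝ (Fin m))
    (hne : K.Nonempty) (hcl : IsClosed K) (hconv : Convex ℝ K)
    (L : ℝ) (hL : 0 < L) (hLip : ∀ x ∈ K, ∀ y ∈ K, ‖F x - F y‖ ≤ L * ‖x - y‖)
    (μ : ℝ) (hμ : 0 < μ)
    (hsm : ∀ x ∈ K, ∀ y ∈ K, μ * ‖x - y‖ ^ 2 ≤ ⟪φ x - φ y, x - y⟫)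
    (xt : EuclideanSpace ℝ (Fin m)) (hxt : xt ∈ K)
    (hsol : ∀ x ∈ K, 0 ≤ ⟪φ xt, x - xt⟫)
    (d : ℝ) (hd : d < μ)
    (hFd : ∀ x ∈ K, ‖φ x - F x‖ ≤ d * ‖x - xt‖)
    (α : ℝ) (hα0 : 0 < α) (hα1 : α < 1 / L)
    (proj : EuclideanSpace ℝ (Fin m) → EuclideanSpace ℝ (Fin m))
    (hproj : ∀ z, proj z ∈ K ∧ ∀ w ∈ K, ‖z - proj z‖ ≤ ‖z - w‖)
    (x y : ℕ → EuclideanSpace ℝ (Fin m)) (hx0 : x 0 ∈ K)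
    (hy : ∀ k, y k = proj (x k - α • F (x k)))
    (hxk : ∀ k, x (k + 1) = proj (x k - α • F (y k))) :
    (∀ k, ‖x (k + 1) - xt‖ ^ 2 ≤ ‖x k - xt‖ ^ 2
        - (1 - α ^ 2 * L ^ 2) * ‖x k - y k‖ ^ 2
        - 2 * α * (μ - d) * ‖y k - xt‖ ^ 2) ∧
    Filter.Tendsto x Filter.atTop (nhds xt) ∧
    Filter.Tendsto y Filter.atTop (nhds xt) := by
  -- variational characterization of the projection
  have hP : ∀ z : EuclideanSpace ℝ (Fin m), ∀ w ∈ K,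
      ⟪z - proj z, w - proj z⟫ ≤ 0 := by
    intro z w hw
    haveI : Nonempty K := ⟨⟨proj z, (hproj z).1⟩⟩
    have hbd : BddBelow (Set.range fun w : K => ‖z - (w : EuclideanSpace ℝ (Fin m))‖) := by
      refine ⟨0, ?_⟩
      rintro _ ⟨w, rfl⟩
      exact norm_nonneg _
    have h1 : ‖z - proj z‖ = ⨅ w : K, ‖z - (w : EuclideanSpace ℝ (Fin m))‖ := by
      refine le_antisymm (le_ciInf fun w => (hproj z).2 w w.2) ?_
      exact ciInf_le hbd ⟨proj z, (hproj z).1⟩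
    exact (norm_eq_iInf_iff_real_inner_le_zero hconv (hproj z).1).mp h1 w hw
  have hxK : ∀ k, x k ∈ K := by
    intro k
    cases k with
    | zero => exact hx0
    | succ n => rw [hxk n]; exact (hproj _).1
  have hyK : ∀ k, y k ∈ K := by
    intro k
    rw [hy k]; exact (hproj _).1
  have hαL : α * L < 1 := by
    rw [lt_div_iff₀ hL] at hα1
    exact hα1
  have key : ∀ k, ‖x (k + 1) - xt‖ ^ 2 ≤ ‖x k - xt‖ ^ 2
      - (1 - α ^ 2 * L ^ 2) * ‖x k - y k‖ ^ 2
      - 2 * α * (μ - d) * ‖y k - xt‖ ^ 2 := by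
    intro k
    have hpv := hy k
    have hpw := hxk k
    have huK := hxK k
    have hvK := hyK k
    have hwK := hxK (k + 1)
    set u := x k with hu
    set v := y k with hv
    set w := x (k + 1) with hw
    -- projection inequalities
    have P1 := hP (u - α • F u) w hwK
    rw [← hpv] at P1
    have P2 := hP (u - α • F v) xt hxt
    rw [← hpw] at P2
    have P1' : ⟪u - v, w - v⟫ ≤ α * ⟪F u, w - v⟫ := by
      rw [sub_right_comm, inner_sub_left, real_inner_smul_left] at P1
      linarith
    have P2' : ⟪u - w, xt - w⟫ ≤ α * ⟪F v, xt - w⟫ := by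
      rw [sub_right_comm, inner_sub_left, real_inner_smul_left] at P2
      linarith
    -- strong monotonicity + approximation bound
    have M : (μ - d) * ‖v - xt‖ ^ 2 ≤ ⟪F v, v - xt⟫ := by
      have h1 := hsm v hvK xt hxt
      have h2 := hsol v hvK
      have h3 : ⟪φ v - F v, v - xt⟫ ≤ d * ‖v - xt‖ ^ 2 := by
        calc ⟪φ v - F v, v - xt⟫ ≤ ‖φ v - F v‖ * ‖v - xt‖ := real_inner_le_norm _ _
          _ ≤ (d * ‖v - xt‖) * ‖v - xt‖ :=
              mul_le_mul_of_nonneg_right (hFd v hvK) (norm_nonneg _)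
          _ = d * ‖v - xt‖ ^ 2 := by ring
      have e1 : ⟪φ v - φ xt, v - xt⟫ = ⟪φ v, v - xt⟫ - ⟪φ xt, v - xt⟫ := inner_sub_left _ _ _
      have e2 : ⟪φ v - F v, v - xt⟫ = ⟪φ v, v - xt⟫ - ⟪F v, v - xt⟫ := inner_sub_left _ _ _
      rw [e1] at h1
      rw [e2] at h3
      linarith
    have hM' : α * ((μ - d) * ‖v - xt‖ ^ 2) ≤ α * ⟪F v, v - xt⟫ :=
      mul_le_mul_of_nonneg_left M hα0.le
    -- Lipschitz / Cauchy-Schwarz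
    have hCS' : -(α * (L * ‖u - v‖ * ‖w - v‖)) ≤ α * ⟪F v - F u, w - v⟫ := by
      have h0 : ⟪F u - F v, w - v⟫ ≤ L * ‖u - v‖ * ‖w - v‖ := by
        calc ⟪F u - F v, w - v⟫ ≤ ‖F u - F v‖ * ‖w - v‖ := real_inner_le_norm _ _
          _ ≤ (L * ‖u - v‖) * ‖w - v‖ :=
              mul_le_mul_of_nonneg_right (hLip u huK v hvK) (norm_nonneg _)
          _ = L * ‖u - v‖ * ‖w - v‖ := by ring
      have h1 : ⟪F u - F v, w - v⟫ = -⟪F v - F u, w - v⟫ := by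
        rw [show F u - F v = -(F v - F u) by abel, inner_neg_left]
      have h2 := mul_le_mul_of_nonneg_left h0 hα0.le
      rw [h1] at h2
      linarith
    have AG : 2 * (α * (L * ‖u - v‖ * ‖w - v‖)) ≤ α ^ 2 * L ^ 2 * ‖u - v‖ ^ 2 + ‖w - v‖ ^ 2 := by
      nlinarith [sq_nonneg (α * L * ‖u - v‖ - ‖w - v‖)]
    -- norm identities
    have R3 : ‖u - xt‖ ^ 2 = ‖u - w‖ ^ 2 - 2 * ⟪u - w, xt - w⟫ + ‖w - xt‖ ^ 2 := by
      have h := norm_sub_sq_real (u - w) (xt - w)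
      rw [show (u - w) - (xt - w) = u - xt by abel, norm_sub_rev xt w] at h
      exact h
    have R4 : ‖u - w‖ ^ 2 = ‖u - v‖ ^ 2 - 2 * ⟪u - v, w - v⟫ + ‖w - v‖ ^ 2 := by
      have h := norm_sub_sq_real (u - v) (w - v)
      rw [show (u - v) - (w - v) = u - w by abel] at h
      exact h
    have R1' : α * ⟪F v, xt - w⟫
        = -(α * ⟪F v, v - xt⟫) - α * ⟪F v - F u, w - v⟫ - α * ⟪F u, w - v⟫ := by
      have e : ⟪F v, xt - w⟫ = -⟪F v, v - xt⟫ - ⟪F v - F u, w - v⟫ - ⟪F u, w - v⟫ := by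
        rw [show xt - w = -(v - xt) - (w - v) by abel, inner_sub_right, inner_neg_right,
          inner_sub_left]
        ring
      rw [e]; ring
    linarith [P1', P2', hM', hCS', AG, R3, R4, R1']
  refine ⟨key, ?_⟩
  -- convergence
  set a : ℕ → ℝ := fun k => ‖x k - xt‖ ^ 2 with ha
  have hfac : 0 < 1 - α ^ 2 * L ^ 2 := by
    nlinarith [mul_pos (mul_pos hα0 hL) (sub_pos.mpr hαL), hαL]
  have hμd : 0 < μ - d := by linarith
  have hsucc : ∀ k, a (k + 1) ≤ a k := by
    intro k
    have h := key k
    simp only [ha]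
    nlinarith [mul_nonneg hfac.le (sq_nonneg ‖x k - y k‖),
      mul_nonneg (by positivity : (0:ℝ) ≤ 2 * α * (μ - d)) (sq_nonneg ‖y k - xt‖)]
  have hanti : Antitone a := antitone_nat_of_succ_le hsucc
  have hbdd : BddBelow (Set.range a) := by
    refine ⟨0, ?_⟩
    rintro _ ⟨k, rfl⟩
    exact sq_nonneg _
  have hA : Filter.Tendsto a Filter.atTop (nhds (⨅ k, a k)) := tendsto_atTop_ciInf hanti hbdd
  have hA1 : Filter.Tendsto (fun k => a (k + 1)) Filter.atTop (nhds (⨅ k, a k)) :=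
    hA.comp (Filter.tendsto_add_atTop_nat 1)
  have hdiff : Filter.Tendsto (fun k => a k - a (k + 1)) Filter.atTop (nhds 0) := by
    have := hA.sub hA1
    simpa using this
  have hy2 : Filter.Tendsto (fun k => ‖y k - xt‖ ^ 2) Filter.atTop (nhds 0) := by
    have hg : Filter.Tendsto (fun k => (a k - a (k + 1)) / (2 * α * (μ - d)))
        Filter.atTop (nhds 0) := by
      simpa using hdiff.div_const (2 * α * (μ - d))
    refine squeeze_zero (fun k => sq_nonneg _) (fun k => ?_) hg
    rw [le_div_iff₀ (by positivity)]
    simp only [ha]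
    have h := key k
    nlinarith [mul_nonneg hfac.le (sq_nonneg ‖x k - y k‖)]
  have hxy2 : Filter.Tendsto (fun k => ‖x k - y k‖ ^ 2) Filter.atTop (nhds 0) := by
    have hg : Filter.Tendsto (fun k => (a k - a (k + 1)) / (1 - α ^ 2 * L ^ 2))
        Filter.atTop (nhds 0) := by
      simpa using hdiff.div_const (1 - α ^ 2 * L ^ 2)
    refine squeeze_zero (fun k => sq_nonneg _) (fun k => ?_) hg
    rw [le_div_iff₀ hfac]
    simp only [ha]
    have h := key k
    nlinarith [mul_nonneg (by positivity : (0:ℝ) ≤ 2 * α * (μ - d)) (sq_nonneg ‖y k - xt‖)]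
  have sq_to_zero : ∀ g : ℕ → ℝ, (∀ k, 0 ≤ g k) →
      Filter.Tendsto (fun k => g k ^ 2) Filter.atTop (nhds 0) →
      Filter.Tendsto g Filter.atTop (nhds 0) := by
    intro g hg h
    have h2 := (Real.continuous_sqrt.tendsto 0).comp h
    rw [Real.sqrt_zero] at h2
    exact h2.congr fun k => Real.sqrt_sq (hg k)
  have hyn : Filter.Tendsto (fun k => ‖y k - xt‖) Filter.atTop (nhds 0) :=
    sq_to_zero _ (fun k => norm_nonneg _) hy2
  have hxyn : Filter.Tendsto (fun k => ‖x k - y k‖) Filter.atTop (nhds 0) :=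
    sq_to_zero _ (fun k => norm_nonneg _) hxy2
  have hty : Filter.Tendsto y Filter.atTop (nhds xt) :=
    tendsto_iff_norm_sub_tendsto_zero.mpr hyn
  have htx : Filter.Tendsto x Filter.atTop (nhds xt) := by
    rw [tendsto_iff_norm_sub_tendsto_zero]
    refine squeeze_zero (fun k => norm_nonneg _) (fun k => ?_) (by simpa using hxyn.add hyn)
    calc ‖x k - xt‖ = ‖(x k - y k) + (y k - xt)‖ := by rw [show x k - xt = (x k - y k) + (y k - xt) by abel]
      _ ≤ ‖x k - y k‖ + ‖y k - xt‖ := norm_add_le _ _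
  exact ⟨htx, hty⟩
end
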